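/- The maximizer of Rényi entropy subject to linear expectation constraints has the deformed exponential form: if q*(x) = e^{-z} (1 + γ θ·h(x))^{1/γ} with z chosen so q* is a probability distribution, and q is any distribution with the same expectations E_q{h} = E_{q*}{h}, then H_γ(q) ≤ H_γ(q*), in the special case γ > 0 with 1 + γθ·h(x) > 0 for all x. -/

import Mathlib

open Real

/-- The maximizer of the Rényi entropy subject to linear
expectation constraints has the deformed exponential form: if
`q⋆(x) = (1 + γ θ·h(x))^{1/γ} / Σ_y (1 + γ θ·h(y))^{1/γ}` and `q` is any
probability distribution with the same expectations `E_q{h} = E_{q⋆}{h}`, then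
`H_γ(q) ≤ H_γ(q⋆)`, for `γ > 0` with `1 + γ θ·h(x) > 0` for all `x`. -/
theorem maxent_renyi_deformed_exponential
    {X : Type*} [Fintype X] [Nonempty X] {d : ℕ}
    (h : X → Fin d → ℝ) (θ : Fin d → ℝ) (γ : ℝ) (hγ : 0 < γ)
    (hpos : ∀ x, 0 < 1 + γ * ∑ i, θ i * h x i)
    (qstar : X → ℝ)
    (hqstar : ∀ x, qstar x = (1 + γ * ∑ i, θ i * h x i) ^ (1 / γ)
        / ∑ y, (1 + γ * ∑ i, θ i * h y i) ^ (1 / γ))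
    (q : X → ℝ) (hq0 : ∀ x, 0 ≤ q x) (hq1 : ∑ x, q x = 1)
    (hconstr : ∀ i, ∑ x, q x * h x i = ∑ x, qstar x * h x i) :
    -(1 / γ) * Real.log (∑ x, q x ^ (γ + 1))
      ≤ -(1 / γ) * Real.log (∑ x, qstar x ^ (γ + 1)) := by
  set D : ℝ := ∑ y, (1 + γ * ∑ i, θ i * h y i) ^ (1 / γ) with hD
  have hDpos : 0 < D :=
    Finset.sum_pos (fun y _ => Real.rpow_pos_of_pos (hpos y) _) Finset.univ_nonempty
  have hqs_pos : ∀ x, 0 < qstar x := by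
    intro x; rw [hqstar x]
    exact div_pos (Real.rpow_pos_of_pos (hpos x) _) hDpos
  have hqs_sum : ∑ x, qstar x = 1 := by
    simp only [hqstar]
    rw [← Finset.sum_div, ← hD, div_self hDpos.ne']
  -- qstar x ^ γ = (1 + γ θ·h x) / D ^ γ
  have hpow : ∀ x, qstar x ^ γ = (1 + γ * ∑ i, θ i * h x i) / D ^ γ := by
    intro x
    rw [hqstar x, Real.div_rpow (Real.rpow_nonneg (hpos x).le _) hDpos.le,
      ← Real.rpow_mul (hpos x).le, one_div, inv_mul_cancel₀ hγ.ne', Real.rpow_one]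
  -- key sum identity
  have key : ∀ p : X → ℝ, (∑ x, p x = 1) →
      ∑ x, p x * qstar x ^ γ = (1 + γ * ∑ i, θ i * ∑ x, p x * h x i) / D ^ γ := by
    intro p hp1
    simp only [hpow, mul_div_assoc']
    rw [← Finset.sum_div]
    congr 1
    have : ∀ x, p x * (1 + γ * ∑ i, θ i * h x i)
        = p x + γ * ∑ i, θ i * (p x * h x i) := by
      intro x
      rw [Finset.mul_sum]
      ring_nf
      congr 1
      rw [Finset.mul_sum, Finset.mul_sum]
      apply Finset.sum_congr rfl
      intro i _
      ring
    rw [Finset.sum_congr rfl (fun x _ => this x), Finset.sum_add_distrib, hp1,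
      ← Finset.mul_sum, Finset.sum_comm]
    congr 2
    apply Finset.sum_congr rfl
    intro i _
    rw [Finset.mul_sum]
  have hsum_eq : ∑ x, q x * qstar x ^ γ = ∑ x, qstar x * qstar x ^ γ := by
    rw [key q hq1, key qstar hqs_sum]
    congr 3
    exact Finset.sum_congr rfl (fun i _ => by rw [hconstr i])
  have hqs_pow : ∀ x, qstar x * qstar x ^ γ = qstar x ^ (γ + 1) := by
    intro x
    rw [add_comm, Real.rpow_one_add' (hqs_pos x).le (by positivity)]
  -- pointwise convexity bound
  have hconv : ∀ x, qstar x ^ (γ + 1) + (γ + 1) * qstar x ^ γ * (q x - qstar x)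
      ≤ q x ^ (γ + 1) := by
    intro x
    have hb := hqs_pos x
    have hs : -1 ≤ q x / qstar x - 1 := by
      have : 0 ≤ q x / qstar x := div_nonneg (hq0 x) hb.le
      linarith
    have hber := one_add_mul_self_le_rpow_one_add hs (p := γ + 1) (by linarith)
    have h1 : 1 + (q x / qstar x - 1) = q x / qstar x := by ring
    rw [h1] at hber
    have hmul := mul_le_mul_of_nonneg_left hber
      (Real.rpow_nonneg hb.le (γ + 1))
    rw [Real.div_rpow (hq0 x) hb.le, mul_div_cancel₀ _
      (by positivity : qstar x ^ (γ + 1) ≠ 0)] at hmul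
    calc qstar x ^ (γ + 1) + (γ + 1) * qstar x ^ γ * (q x - qstar x)
        = qstar x ^ (γ + 1) * (1 + (γ + 1) * (q x / qstar x - 1)) := by
          rw [← hqs_pow x]
          field_simp
      _ ≤ q x ^ (γ + 1) := hmul
  -- sum the pointwise bound
  have hsum_le : ∑ x, qstar x ^ (γ + 1) ≤ ∑ x, q x ^ (γ + 1) := by
    have hss := Finset.sum_le_sum (s := Finset.univ) (fun x _ => hconv x)
    have hexp : ∑ x, (qstar x ^ (γ + 1) + (γ + 1) * qstar x ^ γ * (q x - qstar x))
        = ∑ x, qstar x ^ (γ + 1)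
          + (γ + 1) * (∑ x, q x * qstar x ^ γ - ∑ x, qstar x * qstar x ^ γ) := by
      rw [Finset.sum_add_distrib]
      congr 1
      rw [← Finset.sum_sub_distrib, Finset.mul_sum]
      apply Finset.sum_congr rfl
      intro x _
      ring
    rw [hexp, hsum_eq, sub_self, mul_zero, add_zero] at hss
    exact hss
  -- conclude via monotonicity of log and negativity of -(1/γ)
  have hSpos : 0 < ∑ x, qstar x ^ (γ + 1) :=
    Finset.sum_pos (fun x _ => Real.rpow_pos_of_pos (hqs_pos x) _) Finset.univ_nonempty
  have hlog := Real.log_le_log hSpos hsum_le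
  have hneg : -(1 / γ) ≤ 0 := by
    simp only [neg_nonpos]
    positivity
  exact mul_le_mul_of_nonpos_left hlog hneg
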